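/- arXiv:2205.11372 — 6 statements merged into one kernel-verified Lean document; each statement's English description precedes it below -/
import Mathlib

section
/- For unit vectors a, s₁, s₂, b in ℝ³, the scalar (real) part of the quaternion product [cos η₁ + I₃r₁ sin η₁][cos η₂ + I₃r₂ sin η₂], where η₁ is the angle between a and s₁, η₂ the angle between s₂ and b, r₁ = (a×s₁)/‖a×s₁‖, r₂ = (s₂×b)/‖s₂×b‖, equals (a·s₁)(s₂·b) − (a·s₂)(s₁·b) + (a·b)(s₁·s₂). -/
/-!
For unit vectors `u, v` the angle `η = arccos (u ⬝ᵥ v)` has `cos η = u ⬝ᵥ v` and, by Lagrange's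
identity, `sin η = ‖u ×₃ v‖`, so `q(η, r)` with `r` the normalised cross product is simply
`u ⬝ᵥ v + I₃ (u ×₃ v)`. The scalar part of a product of two such quaternions is
`c₁ c₂ - w₁ ⬝ᵥ w₂`, and the Binet–Cauchy identity expands `(a ×₃ s₁) ⬝ᵥ (s₂ ×₃ b)`.
-/

open Matrix

infixl:74 " ×₃ " => crossProduct

noncomputable def pureQuat (v : Fin 3 → ℝ) : Quaternion ℝ := ⟨0, v 0, v 1, v 2⟩

/-- The bivector `I₃ v`, identified with a quaternion. -/
noncomputable def biv (v : Fin 3 → ℝ) : Quaternion ℝ := - pureQuat v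

/-- The quaternion `q(η, r) = cos η + (I₃ r) sin η`. -/
noncomputable def quat (η : ℝ) (r : Fin 3 → ℝ) : Quaternion ℝ :=
  ((Real.cos η : ℝ) : Quaternion ℝ) + Real.sin η • biv r

section

variable (v : Fin 3 → ℝ)

@[simp] theorem biv_re : (biv v).re = 0 := neg_zero
@[simp] theorem biv_imI : (biv v).imI = -v 0 := rfl
@[simp] theorem biv_imJ : (biv v).imJ = -v 1 := rfl
@[simp] theorem biv_imK : (biv v).imK = -v 2 := rfl

theorem biv_smul (c : ℝ) : biv (c • v) = c • biv v := by
  ext <;> simp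

end

theorem re_coe_add_biv_mul_coe_add_biv (c d : ℝ) (v w : Fin 3 → ℝ) :
    (((c : Quaternion ℝ) + biv v) * ((d : Quaternion ℝ) + biv w)).re =
      c * d - v ⬝ᵥ w := by
  simp only [Quaternion.re_mul, Quaternion.re_add, Quaternion.re_coe, Quaternion.imI_add,
    Quaternion.imI_coe, Quaternion.imJ_add, Quaternion.imJ_coe, Quaternion.imK_add,
    Quaternion.imK_coe, biv_re, biv_imI, biv_imJ, biv_imK, dotProduct, Fin.sum_univ_three]
  ring

theorem dotProduct_self_nonneg {ι : Type*} [Fintype ι] (v : ι → ℝ) : 0 ≤ v ⬝ᵥ v :=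
  Finset.sum_nonneg fun i _ => mul_self_nonneg (v i)

-- The junk value `(√0)⁻¹ = 0` is harmless: then `v = 0`.
theorem sqrt_dotProduct_self_smul_inv_smul {ι : Type*} [Fintype ι] (v : ι → ℝ) :
    √(v ⬝ᵥ v) • (√(v ⬝ᵥ v))⁻¹ • v = v := by
  by_cases hv : v = 0
  · simp [hv]
  · have hpos : 0 < √(v ⬝ᵥ v) := Real.sqrt_pos.mpr <|
      (dotProduct_self_nonneg v).lt_of_ne'
        (dotProduct_self_eq_zero.not.mpr hv)
    rw [smul_smul, mul_inv_cancel₀ hpos.ne', one_smul]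

theorem cross_dotProduct_cross_self_of_unit {u v : Fin 3 → ℝ} (hu : u ⬝ᵥ u = 1)
    (hv : v ⬝ᵥ v = 1) : (u ×₃ v) ⬝ᵥ (u ×₃ v) = 1 - (u ⬝ᵥ v) ^ 2 := by
  rw [cross_dot_cross, hu, hv, dotProduct_comm v u]
  ring

theorem quat_arccos_dotProduct_of_unit {u v : Fin 3 → ℝ} (hu : u ⬝ᵥ u = 1)
    (hv : v ⬝ᵥ v = 1) :
    quat (Real.arccos (u ⬝ᵥ v)) ((√((u ×₃ v) ⬝ᵥ (u ×₃ v)))⁻¹ • (u ×₃ v)) =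
      ((u ⬝ᵥ v : ℝ) : Quaternion ℝ) + biv (u ×₃ v) := by
  have hsq : (u ⬝ᵥ v) ^ 2 ≤ 1 := by
    have := dotProduct_self_nonneg (u ×₃ v)
    rw [cross_dotProduct_cross_self_of_unit hu hv] at this
    linarith
  obtain ⟨hlo, hhi⟩ := abs_le.mp ((sq_le_one_iff_abs_le_one _).mp hsq)
  have hsin : Real.sin (Real.arccos (u ⬝ᵥ v)) = √((u ×₃ v) ⬝ᵥ (u ×₃ v)) := by
    rw [Real.sin_arccos, cross_dotProduct_cross_self_of_unit hu hv]
  rw [quat, Real.cos_arccos hlo hhi, hsin, ← biv_smul,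
    sqrt_dotProduct_self_smul_inv_smul]

theorem stmt2_general (a s₁ s₂ b : Fin 3 → ℝ)
    (ha : a ⬝ᵥ a = 1) (hs₁ : s₁ ⬝ᵥ s₁ = 1) (hs₂ : s₂ ⬝ᵥ s₂ = 1) (hb : b ⬝ᵥ b = 1) :
    (quat (Real.arccos (a ⬝ᵥ s₁))
        ((Real.sqrt ((a ×₃ s₁) ⬝ᵥ (a ×₃ s₁)))⁻¹ • (a ×₃ s₁)) *
      quat (Real.arccos (s₂ ⬝ᵥ b))
        ((Real.sqrt ((s₂ ×₃ b) ⬝ᵥ (s₂ ×₃ b)))⁻¹ • (s₂ ×₃ b))).re =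
      (a ⬝ᵥ s₁) * (s₂ ⬝ᵥ b) - (a ⬝ᵥ s₂) * (s₁ ⬝ᵥ b) + (a ⬝ᵥ b) * (s₁ ⬝ᵥ s₂) := by
  rw [quat_arccos_dotProduct_of_unit ha hs₁, quat_arccos_dotProduct_of_unit hs₂ hb,
    re_coe_add_biv_mul_coe_add_biv, cross_dot_cross]
  ring

/-- the scalar part of
`q(η₁, r₁) q(η₂, r₂)` equals `(a·s₁)(s₂·b) − (a·s₂)(s₁·b) + (a·b)(s₁·s₂)`. -/
theorem stmt2 (a s₁ s₂ b : Fin 3 → ℝ)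
    (ha : a ⬝ᵥ a = 1) (hs₁ : s₁ ⬝ᵥ s₁ = 1) (hs₂ : s₂ ⬝ᵥ s₂ = 1) (hb : b ⬝ᵥ b = 1)
    (h₁ : a ×₃ s₁ ≠ 0) (h₂ : s₂ ×₃ b ≠ 0) :
    (quat (Real.arccos (a ⬝ᵥ s₁))
        ((Real.sqrt ((a ×₃ s₁) ⬝ᵥ (a ×₃ s₁)))⁻¹ • (a ×₃ s₁)) *
      quat (Real.arccos (s₂ ⬝ᵥ b))
        ((Real.sqrt ((s₂ ×₃ b) ⬝ᵥ (s₂ ×₃ b)))⁻¹ • (s₂ ×₃ b))).re =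
      (a ⬝ᵥ s₁) * (s₂ ⬝ᵥ b) - (a ⬝ᵥ s₂) * (s₁ ⬝ᵥ b) + (a ⬝ᵥ b) * (s₁ ⬝ᵥ s₂) :=
  stmt2_general a s₁ s₂ b ha hs₁ hs₂ hb
end

section
/- Let K be the ℝ-algebra ℍ ⊕ ℍε, where ε is a central element with ε² = 1 and conjugation (q_r + q_d ε)† = q_r† + q_d† ε. For any two elements Q₁ = q_{r1} + q_{d1}ε and Q₂ = q_{r2} + q_{d2}ε of K, the identity (Q₁Q₂)(Q₁Q₂)† = (Q₁Q₁†)(Q₂Q₂†) holds, i.e., the 'norm' N(Q) := QQ† is multiplicative. -/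
/-- Multiplication in `K = ℍ ⊕ ℍε` with `ε` central and `ε² = 1`:
`(q_r + q_d ε)(p_r + p_d ε) = (q_r p_r + q_d p_d) + (q_r p_d + q_d p_r)ε`. -/
noncomputable def Kmul (Q P : Quaternion ℝ × Quaternion ℝ) : Quaternion ℝ × Quaternion ℝ :=
  (Q.1 * P.1 + Q.2 * P.2, Q.1 * P.2 + Q.2 * P.1)

/-- Conjugation in `K`: `(q_r + q_d ε)† = q_r† + q_d† ε`. -/
noncomputable def Kconj (Q : Quaternion ℝ × Quaternion ℝ) : Quaternion ℝ × Quaternion ℝ :=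
  (star Q.1, star Q.2)

set_option maxHeartbeats 2000000 in
/-- the norm `N(Q) = Q Q†` in `K = ℍ ⊕ ℍε` is multiplicative:
`(Q₁Q₂)(Q₁Q₂)† = (Q₁Q₁†)(Q₂Q₂†)`. -/
theorem stmt5 (Q₁ Q₂ : Quaternion ℝ × Quaternion ℝ) :
    Kmul (Kmul Q₁ Q₂) (Kconj (Kmul Q₁ Q₂)) =
      Kmul (Kmul Q₁ (Kconj Q₁)) (Kmul Q₂ (Kconj Q₂)) := by
  simp only [Kmul, Kconj, Prod.mk.injEq]
  constructor <;>
  · ext <;>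
    simp only [Quaternion.ext_iff, Quaternion.re_mul, Quaternion.imI_mul,
      Quaternion.imJ_mul, Quaternion.imK_mul, Quaternion.re_star, Quaternion.imI_star,
      Quaternion.imJ_star, Quaternion.imK_star, Quaternion.re_add, Quaternion.imI_add,
      Quaternion.imJ_add, Quaternion.imK_add] <;>
    ring
end

section
/- Let K = ℍ ⊕ ℍε with ε central, ε² = 1. Define S⁷ := { q_r + q_d ε ∈ K : q_r q_d† + q_d q_r† = 0 and ‖q_r‖² + ‖q_d‖² = 1 }. Then S⁷ is closed under multiplication: if Q₁, Q₂ ∈ S⁷ then Q₁Q₂ ∈ S⁷. -/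
open Quaternion

lemma s7_helper (a b c d : Quaternion ℝ)
    (h1 : a * star b + b * star a = 0) (n1 : normSq a + normSq b = 1)
    (h2 : c * star d + d * star c = 0) (n2 : normSq c + normSq d = 1) :
    (a*c+b*d) * star (a*d+b*c) + (a*d+b*c) * star (a*c+b*d) = 0 ∧
    normSq (a*c+b*d) + normSq (a*d+b*c) = 1 := by
  have key : ∀ x y : Quaternion ℝ,
      x * ((c * star d + d * star c) * y) = 0 := fun x y => by rw [h2]; simp
  have hcoe : ((normSq c + normSq d : ℝ) : Quaternion ℝ) = 1 := by rw [n2]; norm_num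
  constructor
  · have expand : (a*c+b*d) * star (a*d+b*c) + (a*d+b*c) * star (a*c+b*d)
        = a * ((c * star d + d * star c) * star a)
          + b * ((c * star d + d * star c) * star b)
          + (a * (((normSq c : ℝ) : Quaternion ℝ) + ((normSq d : ℝ) : Quaternion ℝ)) * star b
            + b * (((normSq c : ℝ) : Quaternion ℝ) + ((normSq d : ℝ) : Quaternion ℝ)) * star a) := by
      rw [← self_mul_star c, ← self_mul_star d]
      simp only [star_add, star_mul]
      noncomm_ring
    rw [expand, key, key]
    have : (((normSq c : ℝ) : Quaternion ℝ) + ((normSq d : ℝ) : Quaternion ℝ)) = 1 := by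
      rw [← Quaternion.coe_add, hcoe]
    rw [this]
    simpa using h1
  · have : ((normSq (a*c+b*d) + normSq (a*d+b*c) : ℝ) : Quaternion ℝ) = ((1:ℝ) : Quaternion ℝ) := by
      push_cast
      rw [← self_mul_star (a*c+b*d), ← self_mul_star (a*d+b*c)]
      have expand : (a*c+b*d) * star (a*c+b*d) + (a*d+b*c) * star (a*d+b*c)
          = a * ((c * star d + d * star c) * star b)
            + b * ((c * star d + d * star c) * star a)
            + (a * (((normSq c : ℝ) : Quaternion ℝ) + ((normSq d : ℝ) : Quaternion ℝ)) * star a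
              + b * (((normSq c : ℝ) : Quaternion ℝ) + ((normSq d : ℝ) : Quaternion ℝ)) * star b) := by
        rw [← self_mul_star c, ← self_mul_star d]
        simp only [star_add, star_mul]
        noncomm_ring
      rw [expand, key, key]
      have h : (((normSq c : ℝ) : Quaternion ℝ) + ((normSq d : ℝ) : Quaternion ℝ)) = 1 := by
        rw [← Quaternion.coe_add, hcoe]
      rw [h]
      simp only [mul_one, zero_add]
      rw [self_mul_star, self_mul_star, ← Quaternion.coe_add, n1]
      norm_num
    exact Quaternion.coe_injective this

/-- The 7-sphere in `K`: elements `q_r + q_d ε` with `q_r q_d† + q_d q_r† = 0`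
and `‖q_r‖² + ‖q_d‖² = 1`. -/
def S7 : Set (Quaternion ℝ × Quaternion ℝ) :=
  {Q | Q.1 * star Q.2 + Q.2 * star Q.1 = 0 ∧
       Quaternion.normSq Q.1 + Quaternion.normSq Q.2 = 1}

/-- `S⁷` is closed under multiplication in `K`. -/
theorem stmt7 (Q₁ Q₂ : Quaternion ℝ × Quaternion ℝ)
    (h₁ : Q₁ ∈ S7) (h₂ : Q₂ ∈ S7) : Kmul Q₁ Q₂ ∈ S7 := by
  obtain ⟨ha, hb⟩ := h₁
  obtain ⟨hc, hd⟩ := h₂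
  exact s7_helper Q₁.1 Q₁.2 Q₂.1 Q₂.2 ha hb hc hd
end

section
/- In K = ℍ ⊕ ℍε, if Q₁ = q_{r1} + q_{d1}ε and Q₂ = q_{r2} + q_{d2}ε satisfy the orthogonality conditions q_{r1}q_{d1}† + q_{d1}q_{r1}† = 0 and q_{r2}q_{d2}† + q_{d2}q_{r2}† = 0, then the product Q₃ = Q₁Q₂ = q_{r3} + q_{d3}ε, with q_{r3} = q_{r1}q_{r2} + q_{d1}q_{d2} and q_{d3} = q_{r1}q_{d2} + q_{d1}q_{r2}, also satisfies q_{r3}q_{d3}† + q_{d3}q_{r3}† = 0. -/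
/-!
Write `⟨p, q⟩ := p q† + q p†`. Expanding the components of the product gives
`⟨q_{r3}, q_{d3}⟩ = q_{r1} ⟨q_{r2}, q_{d2}⟩ q_{r1}† + q_{d1} ⟨q_{r2}, q_{d2}⟩ q_{d1}†
  + q_{r1} (‖q_{r2}‖² + ‖q_{d2}‖²) q_{d1}† + q_{d1} (‖q_{r2}‖² + ‖q_{d2}‖²) q_{r1}†`.
Both `⟨p, q⟩ = 2 Re (p q†)` and `‖p‖² = p p†` are real, hence central, so this collapses to
`(‖q_{r1}‖² + ‖q_{d1}‖²) ⟨q_{r2}, q_{d2}⟩ + (‖q_{r2}‖² + ‖q_{d2}‖²) ⟨q_{r1}, q_{d1}⟩`,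
which vanishes under the two orthogonality conditions.
-/

namespace Quaternion

variable {R : Type*} [CommRing R]

theorem mul_star_add_mul_star_eq_coe (p q : ℍ[R]) :
    p * star q + q * star p = ↑(2 * (p * star q).re) := by
  simpa only [star_mul, star_star] using self_add_star' (p * star q)

theorem mul_coe_mul (a b : ℍ[R]) (r : R) : a * (r : ℍ[R]) * b = r * (a * b) := by
  rw [← coe_commutes, mul_assoc]

theorem dualProduct_mul_star_add_mul_star (a c b d : ℍ[R]) :
    (a * b + c * d) * star (a * d + c * b) + (a * d + c * b) * star (a * b + c * d) =
      ↑(normSq a + normSq c) * (b * star d + d * star b) +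
        ↑(normSq b + normSq d) * (a * star c + c * star a) := by
  have expand :
      (a * b + c * d) * star (a * d + c * b) + (a * d + c * b) * star (a * b + c * d) =
        a * (b * star d + d * star b) * star a + c * (b * star d + d * star b) * star c +
          a * (b * star b + d * star d) * star c + c * (b * star b + d * star d) * star a := by
    simp only [star_add, star_mul]
    noncomm_ring
  obtain ⟨s, hs⟩ : ∃ s : R, b * star d + d * star b = s := ⟨_, mul_star_add_mul_star_eq_coe b d⟩
  rw [expand, hs, self_mul_star, self_mul_star, ← coe_add, mul_coe_mul, mul_coe_mul, mul_coe_mul,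
    mul_coe_mul, ← coe_commutes s, coe_add (normSq a), ← self_mul_star a, ← self_mul_star c]
  noncomm_ring

end Quaternion

/-- if `q_{r1}q_{d1}† + q_{d1}q_{r1}† = 0` and
`q_{r2}q_{d2}† + q_{d2}q_{r2}† = 0`, then the components
`q_{r3} = q_{r1}q_{r2} + q_{d1}q_{d2}` and `q_{d3} = q_{r1}q_{d2} + q_{d1}q_{r2}`
of the product in `K = ℍ ⊕ ℍε` satisfy `q_{r3}q_{d3}† + q_{d3}q_{r3}† = 0`. -/
theorem stmt8 (qr1 qd1 qr2 qd2 : Quaternion ℝ)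
    (h₁ : qr1 * star qd1 + qd1 * star qr1 = 0)
    (h₂ : qr2 * star qd2 + qd2 * star qr2 = 0) :
    (qr1 * qr2 + qd1 * qd2) * star (qr1 * qd2 + qd1 * qr2) +
      (qr1 * qd2 + qd1 * qr2) * star (qr1 * qr2 + qd1 * qd2) = 0 := by
  rw [Quaternion.dualProduct_mul_star_add_mul_star, h₁, h₂, mul_zero, mul_zero, add_zero]
end

section
/- In K = ℍ ⊕ ℍε, if U = u_r + u_d ε and V = v_r + v_d ε are nonzero elements each satisfying the orthogonality condition (u_r u_d† + u_d u_r† = 0 and v_r v_d† + v_d v_r† = 0), then UV ≠ 0. In other words, the subset of K consisting of elements with orthogonal quaternion components contains no zero divisor pairs. -/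
lemma key (u1 u2 : Quaternion ℝ) (h : u1 + u2 = 0)
    (horth : u1 * star u2 + u2 * star u1 = 0) : u1 = 0 := by
  have h2 : u2 = -u1 := eq_neg_of_add_eq_zero_right h
  rw [h2, star_neg, mul_neg, neg_mul, ← neg_add, neg_eq_zero] at horth
  rw [Quaternion.self_mul_star, ← Quaternion.coe_add] at horth
  have h4 : Quaternion.normSq u1 + Quaternion.normSq u1 = 0 :=
    Quaternion.coe_injective (by simpa using horth)
  have h5 : Quaternion.normSq u1 = 0 := by
    have := Quaternion.normSq_nonneg (a := u1); linarith
  rwa [Quaternion.normSq_eq_zero] at h5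

/-- if `U ≠ 0` and `V ≠ 0` each satisfy the orthogonality condition
(`u_r u_d† + u_d u_r† = 0`, `v_r v_d† + v_d v_r† = 0`), then `UV ≠ 0`. -/
theorem stmt10 (U V : Quaternion ℝ × Quaternion ℝ)
    (hU : U ≠ 0) (hV : V ≠ 0)
    (hUorth : U.1 * star U.2 + U.2 * star U.1 = 0)
    (hVorth : V.1 * star V.2 + V.2 * star V.1 = 0) :
    Kmul U V ≠ 0 := by
  intro h
  have h1 : U.1 * V.1 + U.2 * V.2 = 0 := congrArg Prod.fst h
  have h2 : U.1 * V.2 + U.2 * V.1 = 0 := congrArg Prod.snd h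
  have hsum : (U.1 + U.2) * (V.1 + V.2) = 0 := by
    rw [add_mul, mul_add, mul_add, add_comm (U.2 * V.1) (U.2 * V.2),
      add_add_add_comm, h1, h2, add_zero]
  rcases mul_eq_zero.mp hsum with hu | hv
  · have hU1 : U.1 = 0 := key U.1 U.2 hu hUorth
    have hU2 : U.2 = 0 := by rw [hU1, zero_add] at hu; exact hu
    exact hU (by ext <;> simp [hU1, hU2])
  · have hV1 : V.1 = 0 := key V.1 V.2 hv hVorth
    have hV2 : V.2 = 0 := by rw [hV1, zero_add] at hv; exact hv
    exact hV (by ext <;> simp [hV1, hV2])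
end

section
/- Let s be uniformly distributed on the unit sphere S² ⊂ ℝ³ and for fixed unit vectors a, b define A(s) = sign(a·s) and B(s) = −sign(b·s). Then the expectation E[A(s)B(s)] = −∫_{S²} sign(a·s) sign(b·s) dp(s) equals −1 + (2/π)η_{ab} for 0 ≤ η_{ab} ≤ π, where η_{ab} is the angle between a and b. -/
/-!
The integrand `x ↦ sign⟪a, x⟫ · sign⟪b, x⟫` is constant on rays, so by the polar decomposition
`ℝ³ ∖ {0} ≃ S² × (0, ∞)` its sphere average equals its average against the Gaussian weight
`exp (-‖x‖²)`. In an orthonormal basis `(a, v, ·)` with `b = cos θ • a + sin θ • v` it depends on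
the first two coordinates only; integrating out the third one and passing to polar coordinates
in the plane leaves the circle average of `sign (cos φ) · sign (cos (φ - θ))`. The two signs
disagree on a set of measure `2θ` per period, so this average is `1 - 2θ/π`.
-/

open MeasureTheory RealInnerProductSpace

/-- The uniform (normalized, rotation-invariant) probability measure on the unit
sphere in `ℝ³`, obtained by normalizing the spherical part of Lebesgue measure. -/
noncomputable def sphereUniform :
    Measure (Metric.sphere (0 : EuclideanSpace ℝ (Fin 3)) 1) :=
  ((volume : Measure (EuclideanSpace ℝ (Fin 3))).toSphere Set.univ)⁻¹ •
    (volume : Measure (EuclideanSpace ℝ (Fin 3))).toSphere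

open Real Set Metric

local notation "dim" => Module.finrank ℝ

local notation "ℝ³" => EuclideanSpace ℝ (Fin 3)

namespace Real

theorem sign_mul_of_pos {r : ℝ} (hr : 0 < r) (x : ℝ) : sign (r * x) = sign x := by
  rcases lt_trichotomy x 0 with hx | rfl | hx
  · rw [sign_of_neg hx, sign_of_neg (mul_neg_of_pos_of_neg hr hx)]
  · rw [mul_zero]
  · rw [sign_of_pos hx, sign_of_pos (mul_pos hr hx)]

theorem sign_cos_of_mem_Ioo {x : ℝ} (hx : x ∈ Ioo (-(π / 2)) (π / 2)) : sign (cos x) = 1 :=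
  sign_of_pos (cos_pos_of_mem_Ioo hx)

theorem sign_cos_of_mem_Ioo_add_pi {x : ℝ} (hx : x ∈ Ioo (π / 2) (π / 2 + π)) :
    sign (cos x) = -1 :=
  sign_of_neg (cos_neg_of_pi_div_two_lt_of_lt hx.1 (by linarith [hx.2]))

theorem sign_cos_of_mem_Ioo_sub_pi {x : ℝ} (hx : x ∈ Ioo (-(π / 2) - π) (-(π / 2))) :
    sign (cos x) = -1 := by
  rw [← cos_neg]
  exact sign_cos_of_mem_Ioo_add_pi ⟨by linarith [hx.2], by linarith [hx.1]⟩

/-- Over a period, `sign ∘ cos` and its translate by `θ` disagree exactly on two intervals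
of length `θ`; integrating over `[-π/2, 3π/2]` makes these intervals explicit. -/
theorem integral_sign_cos_mul_sign_cos_sub {θ : ℝ} (hθ₀ : 0 ≤ θ) (hθπ : θ ≤ π) :
    ∫ φ in (-π)..π, sign (cos φ) * sign (cos (φ - θ)) = 2 * π - 4 * θ := by
  set g : ℝ → ℝ := fun φ => sign (cos φ) * sign (cos (φ - θ))
  have hπ := pi_pos
  have piece : ∀ {c d e : ℝ}, c ≤ d → EqOn g (fun _ => e) (Ioo c d) →
      IntervalIntegrable g volume c d ∧ ∫ φ in c..d, g φ = (d - c) * e := fun hcd h =>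
    ⟨intervalIntegrable_const.congr_uIoo (fun x hx => (h (uIoo_of_le hcd ▸ hx)).symm),
      by rw [intervalIntegral.integral_congr_Ioo_of_le hcd h, intervalIntegral.integral_const,
        smul_eq_mul]⟩
  obtain ⟨i₁, h₁⟩ := piece (c := -(π / 2)) (d := θ - π / 2) (e := -1) (by linarith)
    fun φ hφ => by
      simp only [g]
      rw [sign_cos_of_mem_Ioo ⟨hφ.1, by linarith [hφ.2]⟩,
        sign_cos_of_mem_Ioo_sub_pi ⟨by linarith [hφ.1], by linarith [hφ.2]⟩, mul_neg_one]
  obtain ⟨i₂, h₂⟩ := piece (c := θ - π / 2) (d := π / 2) (e := 1) (by linarith)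
    fun φ hφ => by
      simp only [g]
      rw [sign_cos_of_mem_Ioo ⟨by linarith [hφ.1], hφ.2⟩,
        sign_cos_of_mem_Ioo ⟨by linarith [hφ.1], by linarith [hφ.2]⟩, mul_one]
  obtain ⟨i₃, h₃⟩ := piece (c := π / 2) (d := θ + π / 2) (e := -1) (by linarith)
    fun φ hφ => by
      simp only [g]
      rw [sign_cos_of_mem_Ioo_add_pi ⟨hφ.1, by linarith [hφ.2]⟩,
        sign_cos_of_mem_Ioo ⟨by linarith [hφ.1], by linarith [hφ.2]⟩, mul_one]
  obtain ⟨i₄, h₄⟩ := piece (c := θ + π / 2) (d := π / 2 + π) (e := 1) (by linarith)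
    fun φ hφ => by
      simp only [g]
      rw [sign_cos_of_mem_Ioo_add_pi ⟨by linarith [hφ.1], hφ.2⟩,
        sign_cos_of_mem_Ioo_add_pi ⟨by linarith [hφ.1], by linarith [hφ.2]⟩, neg_one_mul, neg_neg]
  have hperiodic : Function.Periodic g (2 * π) := fun φ => by
    simp only [g, cos_add_two_pi, show φ + 2 * π - θ = φ - θ + 2 * π by ring]
  calc ∫ φ in (-π)..π, g φ = ∫ φ in (-(π / 2))..(-(π / 2) + 2 * π), g φ := by
        rw [← hperiodic.intervalIntegral_add_eq (-π) (-(π / 2))]; ring_nf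
    _ = 2 * π - 4 * θ := by
        rw [show -(π / 2) + 2 * π = π / 2 + π by ring,
          ← intervalIntegral.integral_add_adjacent_intervals i₁ (i₂.trans (i₃.trans i₄)),
          ← intervalIntegral.integral_add_adjacent_intervals i₂ (i₃.trans i₄),
          ← intervalIntegral.integral_add_adjacent_intervals i₃ i₄, h₁, h₂, h₃, h₄]
        ring

end Real

section SphereAverage

variable {E : Type*} [NormedAddCommGroup E] [NormedSpace ℝ E] [FiniteDimensional ℝ E]
  [Nontrivial E] [MeasurableSpace E] [BorelSpace E] (μ : Measure E) [μ.IsAddHaarMeasure]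

theorem integral_mul_fun_norm_addHaar {f : E → ℝ}
    (hf : ∀ x : E, ∀ r : ℝ, 0 < r → f (r • x) = f x) (h : ℝ → ℝ) :
    ∫ x, f x * h ‖x‖ ∂μ =
      (∫ s, f s ∂μ.toSphere) * ∫ r : Ioi (0 : ℝ), h r ∂.volumeIoiPow (dim E - 1) :=
  calc
    ∫ x, f x * h ‖x‖ ∂μ = ∫ x : ({(0)}ᶜ : Set E), f x * h ‖x.1‖ ∂(μ.comap (↑)) := by
      rw [integral_subtype_comap (measurableSet_singleton _).compl fun x ↦ f x * h ‖x‖,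
        restrict_compl_singleton]
    _ = ∫ p : sphere (0 : E) 1 × Ioi (0 : ℝ), f p.1 * h p.2
          ∂μ.toSphere.prod (.volumeIoiPow (dim E - 1)) := by
      rw [← μ.measurePreserving_homeomorphUnitSphereProd.integral_comp
        (Homeomorph.measurableEmbedding _)]
      congr with x
      have hx : 0 < ‖(x : E)‖ := norm_pos_iff.2 x.2
      simp [hf _ _ (inv_pos.2 hx)]
    _ = _ := integral_prod_mul (fun s : sphere (0 : E) 1 => f s) (fun r : Ioi (0 : ℝ) => h r)

theorem average_toSphere_eq_div {f : E → ℝ}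
    (hf : ∀ x : E, ∀ r : ℝ, 0 < r → f (r • x) = f x) {h : ℝ → ℝ}
    (hh : ∫ x, h ‖x‖ ∂μ ≠ 0) :
    ⨍ s, f s ∂μ.toSphere = (∫ x, f x * h ‖x‖ ∂μ) / ∫ x, h ‖x‖ ∂μ := by
  have hweight : ∫ x, h ‖x‖ ∂μ =
      μ.toSphere.real univ * ∫ r : Ioi (0 : ℝ), h r ∂.volumeIoiPow (dim E - 1) := by
    simpa using integral_mul_fun_norm_addHaar μ (f := fun _ => 1) (fun _ _ _ => rfl) h
  rw [hweight] at hh ⊢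
  rw [integral_mul_fun_norm_addHaar μ hf, average_eq, smul_eq_mul,
    mul_div_mul_right _ _ (right_ne_zero_of_mul hh), inv_mul_eq_div]

end SphereAverage

theorem integral_exp_neg_sq_norm_pos (V : Type*) [NormedAddCommGroup V] [InnerProductSpace ℝ V]
    [FiniteDimensional ℝ V] [MeasurableSpace V] [BorelSpace V] :
    0 < ∫ v : V, exp (-‖v‖ ^ 2) := by
  have := GaussianFourier.integral_rexp_neg_mul_sq_norm (V := V) one_pos
  simp only [neg_mul, one_mul, div_one] at this
  rw [this]
  positivity

theorem integral_euclideanSpace_fin_three_mul (H : ℝ → ℝ → ℝ) (g : ℝ → ℝ) :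
    ∫ y : ℝ³, H (y 0) (y 1) * g (y 2) = (∫ p : ℝ × ℝ, H p.1 p.2) * ∫ t, g t := by
  rw [← (EuclideanSpace.volume_preserving_symm_measurableEquiv_toLp (Fin 3)).symm _
      |>.integral_comp (MeasurableEquiv.measurableEmbedding _),
    ← ((volume_preserving_piFinSuccAbove (fun _ : Fin 3 => ℝ) 2).symm _).integral_comp
      (MeasurableEquiv.measurableEmbedding _),
    ← (volume_preserving_finTwoArrow ℝ).integral_comp (MeasurableEquiv.measurableEmbedding _),
    mul_comm, Measure.volume_eq_prod, ← integral_prod_mul]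
  congr 1 with ⟨t, u⟩
  exact mul_comm _ _

theorem integral_mul_sq_add_sq_eq_polar {F : ℝ → ℝ → ℝ}
    (hF : ∀ r x y : ℝ, 0 < r → F (r * x) (r * y) = F x y) (h : ℝ → ℝ) :
    ∫ p : ℝ × ℝ, F p.1 p.2 * h (p.1 ^ 2 + p.2 ^ 2) =
      (∫ r in Ioi 0, r * h (r ^ 2)) * ∫ φ in (-π)..π, F (cos φ) (sin φ) := by
  rw [← integral_comp_polarCoord_symm, polarCoord_target,
    intervalIntegral.integral_of_le (by linarith [pi_pos]), integral_Ioc_eq_integral_Ioo,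
    ← setIntegral_prod_mul, Measure.volume_eq_prod]
  refine setIntegral_congr_fun (measurableSet_Ioi.prod measurableSet_Ioo) ?_
  rintro ⟨r, φ⟩ ⟨hr, -⟩
  simp only [polarCoord_symm_apply, smul_eq_mul, hF r _ _ hr, mul_pow, ← mul_add,
    cos_sq_add_sin_sq, mul_one]
  ring

theorem integral_euclideanSpace_fin_three_gaussian_div {G : ℝ → ℝ → ℝ}
    (hG : ∀ r x y : ℝ, 0 < r → G (r * x) (r * y) = G x y) :
    (∫ y : ℝ³, G (y 0) (y 1) * exp (-‖y‖ ^ 2)) / ∫ y : ℝ³, exp (-‖y‖ ^ 2) =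
      (∫ φ in (-π)..π, G (cos φ) (sin φ)) / (2 * π) := by
  set K := (∫ r in Ioi 0, r * exp (-r ^ 2)) * ∫ t, exp (-t ^ 2)
  have hsplit : ∀ {F : ℝ → ℝ → ℝ}, (∀ r x y : ℝ, 0 < r → F (r * x) (r * y) = F x y) →
      ∫ y : ℝ³, F (y 0) (y 1) * exp (-‖y‖ ^ 2) = K * ∫ φ in (-π)..π, F (cos φ) (sin φ) := by
    intro F hF
    have hfactor : ∀ y : ℝ³, F (y 0) (y 1) * exp (-‖y‖ ^ 2) =
        F (y 0) (y 1) * exp (-(y 0 ^ 2 + y 1 ^ 2)) * exp (-y 2 ^ 2) := fun y => by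
      rw [EuclideanSpace.real_norm_sq_eq, Fin.sum_univ_three, mul_assoc, ← exp_add]
      ring_nf
    rw [integral_congr_ae (.of_forall hfactor),
      integral_euclideanSpace_fin_three_mul (fun x y => F x y * exp (-(x ^ 2 + y ^ 2)))
        fun t => exp (-t ^ 2),
      integral_mul_sq_add_sq_eq_polar hF fun s => exp (-s)]
    ring
  have hgauss : ∫ y : ℝ³, exp (-‖y‖ ^ 2) = K * (2 * π) := by
    simpa [two_mul] using hsplit (F := fun _ _ => 1) fun _ _ _ _ => rfl
  have hK : K ≠ 0 :=
    left_ne_zero_of_mul (hgauss ▸ (integral_exp_neg_sq_norm_pos ℝ³).ne')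
  rw [hsplit hG, hgauss, mul_div_mul_left _ _ hK]

section OrthonormalPair

variable {V : Type*} [NormedAddCommGroup V] [InnerProductSpace ℝ V]

theorem exists_norm_eq_one_inner_eq_zero_smul_eq [FiniteDimensional ℝ V] (hV : 2 ≤ dim V)
    (a : V) {w : V} (hw : ⟪a, w⟫ = 0) : ∃ u : V, ‖u‖ = 1 ∧ ⟪a, u⟫ = 0 ∧ ‖w‖ • u = w := by
  by_cases hw₀ : w = 0
  · have hspan : (ℝ ∙ a)ᗮ ≠ ⊥ := by
      rw [Ne, Submodule.orthogonal_eq_bot_iff]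
      intro htop
      have := finrank_span_le_card (R := ℝ) ({a} : Set V)
      rw [htop, finrank_top] at this
      simp at this
      omega
    obtain ⟨u, hu, hu₀⟩ := Submodule.exists_mem_ne_zero_of_ne_bot hspan
    refine ⟨‖u‖⁻¹ • u, norm_smul_inv_norm hu₀, ?_, by simp [hw₀]⟩
    rw [real_inner_smul_right, Submodule.mem_orthogonal_singleton_iff_inner_right.1 hu, mul_zero]
  · exact ⟨‖w‖⁻¹ • w, norm_smul_inv_norm hw₀, by rw [real_inner_smul_right, hw, mul_zero],
      smul_inv_smul₀ (norm_ne_zero_iff.2 hw₀) w⟩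

theorem exists_orthonormalBasis_eq_inner_smul_add [FiniteDimensional ℝ V] {n : ℕ}
    (hV : dim V = n + 2) {a : V} (ha : ‖a‖ = 1) (b : V) :
    ∃ B : OrthonormalBasis (Fin (n + 2)) ℝ V,
      B 0 = a ∧ b = ⟪a, b⟫ • B 0 + ‖b - ⟪a, b⟫ • a‖ • B 1 := by
  obtain ⟨u, hu, hau, hw⟩ := exists_norm_eq_one_inner_eq_zero_smul_eq (by omega) a
    (w := b - ⟪a, b⟫ • a) (by
      rw [inner_sub_right, real_inner_smul_right, real_inner_self_eq_norm_sq, ha]; ring)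
  let v : Fin (n + 2) → V := fun i => if i = 0 then a else u
  have hv : Orthonormal ℝ (({0, 1} : Set (Fin (n + 2))).domRestrict v) := by
    rw [orthonormal_iff_ite]
    rintro ⟨i, hi⟩ ⟨j, hj⟩
    simp only [Set.mem_insert_iff, Set.mem_singleton_iff] at hi hj
    rcases hi with rfl | rfl <;> rcases hj with rfl | rfl <;>
      simp [Set.domRestrict, v, ha, hu, hau, real_inner_comm a u]
  obtain ⟨B, hB⟩ := hv.exists_orthonormalBasis_extension_of_card_eq (by simpa using hV)
  have hB₀ : B 0 = a := by simpa [v] using hB 0 (by simp)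
  have hB₁ : B 1 = u := by simpa [v] using hB 1 (by simp)
  refine ⟨B, hB₀, ?_⟩
  rw [hB₀, hB₁, hw, add_sub_cancel]

theorem norm_sub_inner_smul_eq_sin_arccos {a b : V} (ha : ‖a‖ = 1) (hb : ‖b‖ = 1) :
    ‖b - ⟪a, b⟫ • a‖ = sin (arccos ⟪a, b⟫) := by
  rw [sin_arccos, ← sqrt_sq (norm_nonneg _), norm_sub_sq_real, norm_smul, real_inner_smul_right,
    real_inner_comm, Real.norm_eq_abs, mul_pow, sq_abs, ha, hb]
  ring_nf

end OrthonormalPair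

theorem average_toSphere_euclideanSpace_fin_three (B : OrthonormalBasis (Fin 3) ℝ ℝ³)
    {G : ℝ → ℝ → ℝ} (hG : ∀ r x y : ℝ, 0 < r → G (r * x) (r * y) = G x y) :
    ⨍ s, G ⟪B 0, (s : ℝ³)⟫ ⟪B 1, (s : ℝ³)⟫ ∂(volume : Measure ℝ³).toSphere =
      (∫ φ in (-π)..π, G (cos φ) (sin φ)) / (2 * π) := by
  rw [average_toSphere_eq_div _ (f := fun x => G ⟪B 0, x⟫ ⟪B 1, x⟫)
      (fun x r hr => by simp only [real_inner_smul_right, hG r _ _ hr])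
      (h := fun r => exp (-r ^ 2)) (integral_exp_neg_sq_norm_pos ℝ³).ne',
    ← integral_euclideanSpace_fin_three_gaussian_div hG,
    ← B.measurePreserving_measurableEquiv.integral_comp'
      (fun y : ℝ³ => G (y 0) (y 1) * exp (-‖y‖ ^ 2))]
  congr 2 with x
  simp [OrthonormalBasis.measurableEquiv, B.repr_apply_apply]

/-- for unit vectors `a, b` and `s` uniform on `S²`, with
`A(s) = sign(a·s)` and `B(s) = −sign(b·s)`, the expectation of `A(s)B(s)` equals
`−1 + (2/π)·η_{ab}`, where `η_{ab} = arccos(a·b)` is the angle between `a` and `b`. -/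
theorem stmt19 (a b : EuclideanSpace ℝ (Fin 3)) (ha : ‖a‖ = 1) (hb : ‖b‖ = 1) :
    ∫ s : Metric.sphere (0 : EuclideanSpace ℝ (Fin 3)) 1,
        Real.sign ⟪a, (s : EuclideanSpace ℝ (Fin 3))⟫ *
          (-Real.sign ⟪b, (s : EuclideanSpace ℝ (Fin 3))⟫) ∂sphereUniform =
      -1 + (2 / Real.pi) * Real.arccos ⟪a, b⟫ := by
  set θ := arccos ⟪a, b⟫
  have hab : |⟪a, b⟫| ≤ 1 := by simpa [ha, hb] using abs_real_inner_le_norm a b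
  have hcos : cos θ = ⟪a, b⟫ := cos_arccos (abs_le.1 hab).1 (abs_le.1 hab).2
  obtain ⟨B, hB₀, hb_eq⟩ := exists_orthonormalBasis_eq_inner_smul_add (n := 1) (by simp) ha b
  rw [norm_sub_inner_smul_eq_sin_arccos ha hb, hB₀] at hb_eq
  let G : ℝ → ℝ → ℝ := fun y₀ y₁ => sign y₀ * -sign (⟪a, b⟫ * y₀ + sin θ * y₁)
  have hfG : ∀ x : ℝ³, sign ⟪a, x⟫ * -sign ⟪b, x⟫ = G ⟪B 0, x⟫ ⟪B 1, x⟫ := fun x => by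
    conv_lhs => rw [hb_eq, inner_add_left, real_inner_smul_left, real_inner_smul_left]
    rw [hB₀]
  have hG_homogeneous : ∀ r x y : ℝ, 0 < r → G (r * x) (r * y) = G x y := fun r x y hr => by
    simp only [G, sign_mul_of_pos hr, show ⟪a, b⟫ * (r * x) + sin θ * (r * y) =
      r * (⟪a, b⟫ * x + sin θ * y) by ring]
  have hG_circle : ∀ φ : ℝ, G (cos φ) (sin φ) = -(sign (cos φ) * sign (cos (φ - θ))) := by
    intro φ
    simp only [G, cos_sub, hcos]
    ring_nf
  calc _ = ⨍ s, G ⟪B 0, (s : ℝ³)⟫ ⟪B 1, (s : ℝ³)⟫ ∂(volume : Measure ℝ³).toSphere := by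
        simp only [hfG]
        rfl -- `sphereUniform` is the normalization of `toSphere` by which `⨍` is defined
    _ = (∫ φ in (-π)..π, G (cos φ) (sin φ)) / (2 * π) :=
        average_toSphere_euclideanSpace_fin_three B hG_homogeneous
    _ = -1 + (2 / π) * θ := by
        simp only [hG_circle, intervalIntegral.integral_neg]
        rw [integral_sign_cos_mul_sign_cos_sub (arccos_nonneg _) (arccos_le_pi _)]
        field_simp
        ring
end
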